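/- arXiv:2105.10434 — 2 statements merged into one kernel-verified Lean document; each statement's English description precedes it below -/
import Mathlib

section
/- An assignment p is pareto optimal if and only if its corresponding trading graph contains no directed cycle. -/
variable {A : Type*} {I : Type*}

/-- A strict preference profile: `acc a b` means item `b` is acceptable to agent `a`;
`pref a b b'` means agent `a` strictly prefers item `b'` over item `b`.
Preferences form a strict linear order on the acceptable items of each agent. -/
structure Profile (A : Type*) (I : Type*) where
  acc : A → I → Prop
  pref : A → I → I → Prop
  pref_acc : ∀ a b b', pref a b b' → acc a b ∧ acc a b'
  irrefl : ∀ a b, ¬ pref a b b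
  trans : ∀ a b c d, pref a b c → pref a c d → pref a b d
  total : ∀ a b b', acc a b → acc a b' → b ≠ b' → pref a b b' ∨ pref a b' b

/-- `p` is an assignment: each item is allocated to at most one agent
(`none` plays the role of `b∅`). -/
def IsAssignment (p : A → Option I) : Prop :=
  ∀ a a' b, p a = some b → p a' = some b → a = a'

/-- An assignment is legal if every allocated item is acceptable to its owner. -/
def Legal (P : Profile A I) (p : A → Option I) : Prop :=
  ∀ a b, p a = some b → P.acc a b

/-- Strict comparison of `Option I` values from agent `a`'s point of view,
with `none` (i.e. `b∅`) least preferred. -/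
def Profile.better (P : Profile A I) (a : A) (x y : Option I) : Prop :=
  match x, y with
  | none, some b => P.acc a b
  | some b, some b' => P.pref a b b'
  | _, none => False

def Profile.betterEq (P : Profile A I) (a : A) (x y : Option I) : Prop :=
  x = y ∨ P.better a x y

/-- `q` pareto dominates `p`. -/
def Dominates (P : Profile A I) (p q : A → Option I) : Prop :=
  (∀ a, P.betterEq a (p a) (q a)) ∧ ∃ a, P.better a (p a) (q a)

/-- `p` is pareto optimal: no legal assignment pareto dominates it. -/
def ParetoOptimal (P : Profile A I) (p : A → Option I) : Prop :=
  ¬ ∃ q : A → Option I, IsAssignment q ∧ Legal P q ∧ Dominates P p q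

/-- Cyclic successor on `Fin t`. -/
def cycSucc {t : ℕ} (r : Fin t) : Fin t := ⟨((r : ℕ) + 1) % t, Nat.mod_lt _ (by have := r.2; omega)⟩

/-- `σ` lists the agents of a trading cycle with respect to assignment `p`:
the agents are distinct, each is allocated an item, and each agent strictly prefers
the item of the (cyclically) next agent over its own. -/
def IsTradingCycle (pref : A → I → I → Prop) (p : A → Option I) {t : ℕ}
    (σ : Fin t → A) : Prop :=
  Function.Injective σ ∧
    ∀ r : Fin t, ∃ b b', p (σ r) = some b ∧ p (σ (cycSucc r)) = some b' ∧ pref (σ r) b b'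

/-- The assignment admits some trading cycle. -/
def AdmitsCycle (pref : A → I → I → Prop) (p : A → Option I) : Prop :=
  ∃ (t : ℕ) (_ : 0 < t) (σ : Fin t → A), IsTradingCycle pref p σ

/-- Agent `a` admits a self loop: some unallocated item is strictly preferred by `a`
over its own allocation. -/
def AdmitsSelfLoop (P : Profile A I) (p : A → Option I) (a : A) : Prop :=
  ∃ b : I, (∀ a', p a' ≠ some b) ∧ P.better a (p a) (some b)

/-- The set `K` of agents admits a trading cycle (whose agent set is exactly `K`). -/
def SetAdmitsCycle [DecidableEq A] (pref : A → I → I → Prop) (p : A → Option I)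
    (K : Finset A) : Prop :=
  ∃ (t : ℕ) (_ : 0 < t) (σ : Fin t → A),
    IsTradingCycle pref p σ ∧ Finset.image σ Finset.univ = K

/-- `(k,α)`-optimality for a multi-layered instance `P : Fin ℓ → Profile A I`. -/
def KAOptimal [DecidableEq A] {ℓ : ℕ} (P : Fin ℓ → Profile A I) (p : A → Option I)
    (k α : ℕ) : Prop :=
  (2 ≤ k → ∀ K : Finset A, K.card = k →
      ∃ L : Finset (Fin ℓ), L.card = α ∧ ∀ j ∈ L, ¬ SetAdmitsCycle (P j).pref p K) ∧
  (k = 1 → ∀ a : A, ∃ L : Finset (Fin ℓ), L.card = α ∧ ∀ j ∈ L, ¬ AdmitsSelfLoop (P j) p a)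

/-- `(k,α)`-upper-bounded optimality. -/
def UBOptimal [DecidableEq A] {ℓ : ℕ} (P : Fin ℓ → Profile A I) (p : A → Option I)
    (k α : ℕ) : Prop :=
  (∀ K : Finset A, K.card ≤ k →
      ∃ L : Finset (Fin ℓ), L.card = α ∧ ∀ j ∈ L, ¬ SetAdmitsCycle (P j).pref p K) ∧
  (∀ a : A, ∃ L : Finset (Fin ℓ), L.card = α ∧ ∀ j ∈ L, ¬ AdmitsSelfLoop (P j) p a)

/-- `(k,α)`-subset optimality. -/
def SubsetOptimal [DecidableEq A] {ℓ : ℕ} (P : Fin ℓ → Profile A I) (p : A → Option I)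
    (k α : ℕ) : Prop :=
  (∀ K : Finset A, K.card = k →
      ∃ L : Finset (Fin ℓ), L.card = α ∧
        ∀ j ∈ L, ∀ K' : Finset A, K ⊆ K' → ¬ SetAdmitsCycle (P j).pref p K') ∧
  (k = 1 → ∀ a : A, ∃ L : Finset (Fin ℓ), L.card = α ∧ ∀ j ∈ L, ¬ AdmitsSelfLoop (P j) p a)

/-- `(k,α)`-subset* optimality: the subset condition for all nonempty subsets of size
at most `k`, and the self-loop condition for every value of `k`. -/
def SubsetStarOptimal [DecidableEq A] {ℓ : ℕ} (P : Fin ℓ → Profile A I) (p : A → Option I)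
    (k α : ℕ) : Prop :=
  (∀ K : Finset A, K.Nonempty → K.card ≤ k →
      ∃ L : Finset (Fin ℓ), L.card = α ∧
        ∀ j ∈ L, ∀ K' : Finset A, K ⊆ K' → ¬ SetAdmitsCycle (P j).pref p K') ∧
  (∀ a : A, ∃ L : Finset (Fin ℓ), L.card = α ∧ ∀ j ∈ L, ¬ AdmitsSelfLoop (P j) p a)

/-- `ℓ`-global optimality: pareto optimal (no trading cycle, no self loop) in every layer. -/
def GloballyOptimal {ℓ : ℕ} (P : Fin ℓ → Profile A I) (p : A → Option I) : Prop :=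
  ∀ j : Fin ℓ, ¬ AdmitsCycle (P j).pref p ∧ ∀ a : A, ¬ AdmitsSelfLoop (P j) p a

/-- The trading graph of `(A, I, P, p)` on vertex set `A ⊕ I`. -/
def TGraph (P : Profile A I) (p : A → Option I) : (A ⊕ I) → (A ⊕ I) → Prop :=
  fun x y =>
    match x, y with
    | Sum.inr b, Sum.inl a => p a = some b ∨ ((∀ a', p a' ≠ some b) ∧ P.acc a b)
    | Sum.inl a, Sum.inr b => (∃ b₀, p a = some b₀ ∧ P.pref a b₀ b) ∨ (p a = none ∧ P.acc a b)
    | Sum.inl _, Sum.inl _ => False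
    | Sum.inr _, Sum.inr _ => False

/-- The restriction of `p` to the reduced instance (agents allocated an item,
items allocated to some agent). -/
def redAssign (p : A → Option I) (a : {a : A // p a ≠ none}) :
    Option {b : I // ∃ a', p a' = some b} :=
  match h : p a.1 with
  | none => none
  | some b => some ⟨b, a.1, h⟩

/-- The identity assignment `p_n (a_i) = b_i` on `n` agents/items. -/
def pn (n : ℕ) : Fin n → Option (Fin n) := fun i => some i

/-- The profile `P₁(G)`: agent `a_i` prefers exactly the items
`{b_j : (v_i , v_j) ∈ E}` over its own item `b_i`. -/
def P1pref {n : ℕ} (E : Fin n → Fin n → Prop) : Fin n → Fin n → Fin n → Prop :=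
  fun i b b' => b = i ∧ E i b'

/-- The profile `P₂(n)`: agent `a_i` prefers only `b_{i+1}` (cyclically) over `b_i`. -/
def P2pref (n : ℕ) : Fin n → Fin n → Fin n → Prop :=
  fun i b b' => b = i ∧ b' = cycSucc i

/-- `colorEnum u w j` is `s_{j+1}`, the `(j+1)`-st smallest color of `[k̃] \ {u,w}`
(0-indexed `j`). -/
def colorEnum {kt : ℕ} (u w : Fin kt) (j : ℕ) : Fin kt :=
  (((Finset.univ : Finset (Fin kt)) \ {u, w}).sort (· ≤ ·)).getD j u

/-- The layer `P^{MCIS}_{{u,w}}` of the multicolored-independent-set reduction,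
recorded via the comparisons with the agents' own items. -/
def MCISpref {n kt : ℕ} (E : Fin n → Fin n → Prop) (c : Fin n → Fin kt)
    (u w : Fin kt) : Fin n → Fin n → Fin n → Prop :=
  fun r b b' => b = r ∧
    ((∃ j : ℕ, j + 1 < kt - 2 ∧ c r = colorEnum u w j ∧ c b' = colorEnum u w (j + 1)) ∨
      (0 < kt - 2 ∧ c r = colorEnum u w (kt - 3) ∧ c b' = u) ∨
      (c r = u ∧ c b' = w ∧ ¬ E r b') ∨
      (0 < kt - 2 ∧ c r = w ∧ c b' = colorEnum u w 0))

/-- Agents (and, identified with them, items) of the cross-composition for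
`Verify-UOA`: `Sum.inl r` is `a_r`; `Sum.inr (j, true)` is `c_j`; `Sum.inr (j, false)`
is `c̄_j`. Each agent owns "its" item. -/
abbrev AgQ (n s : ℕ) := Fin n ⊕ (Fin s × Bool)

/-- The assignment matching each agent with its own item. -/
def pQ (n s : ℕ) : AgQ n s → Option (AgQ n s) := fun a => some a

/-- The profile `Q_{2i-1}` (extending `P₁(G_i)`), recorded via comparisons
with the agents' own items.  `i.testBit j` is the `j`-th bit of `i`. -/
def Q1pref (n s : ℕ) (E : Fin n → Fin n → Prop) (i : ℕ) :
    AgQ n s → AgQ n s → AgQ n s → Prop :=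
  fun a b b' => b = a ∧
    match a, b' with
    | Sum.inl r, Sum.inl r' => (r : ℕ) + 1 < n ∧ E r r'
    | Sum.inl r, Sum.inr (j, bb) => (r : ℕ) = n - 1 ∧ (j : ℕ) = 0 ∧ bb = i.testBit 0
    | Sum.inr (j, bb), Sum.inr (j', bb') =>
        bb = i.testBit (j : ℕ) ∧ (j' : ℕ) = (j : ℕ) + 1 ∧ bb' = i.testBit (j' : ℕ)
    | Sum.inr (j, bb), Sum.inl r' =>
        bb = i.testBit (j : ℕ) ∧ (j : ℕ) = s - 1 ∧ ∃ rn : Fin n, (rn : ℕ) = n - 1 ∧ E rn r'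

/-- The profile `Q_{2i}` (extending `P₂(n)`), recorded via comparisons
with the agents' own items. -/
def Q2pref (n s : ℕ) (i : ℕ) : AgQ n s → AgQ n s → AgQ n s → Prop :=
  fun a b b' => b = a ∧
    match a, b' with
    | Sum.inl r, Sum.inl r' => (r' : ℕ) = (r : ℕ) + 1
    | Sum.inl r, Sum.inr (j, bb) => (r : ℕ) = n - 1 ∧ (j : ℕ) = 0 ∧ bb = i.testBit 0
    | Sum.inr (j, bb), Sum.inr (j', bb') =>
        bb = i.testBit (j : ℕ) ∧ (j' : ℕ) = (j : ℕ) + 1 ∧ bb' = i.testBit (j' : ℕ)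
    | Sum.inr (j, bb), Sum.inl r' =>
        bb = i.testBit (j : ℕ) ∧ (j : ℕ) = s - 1 ∧ (r' : ℕ) = 0

/-- A list of agents forming a trading cycle with respect to `p`. -/
def IsTCList (pref : A → I → I → Prop) (p : A → Option I) (L : List A) : Prop :=
  L ≠ [] ∧ L.Nodup ∧
    ∀ r : Fin L.length, ∃ b b',
      p (L.get r) = some b ∧ p (L.get (cycSucc r)) = some b' ∧ pref (L.get r) b b'


lemma cycSucc_inj' {t : ℕ} : Function.Injective (cycSucc (t := t)) := by
  rintro ⟨i, hi⟩ ⟨j, hj⟩ h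
  simp only [cycSucc, Fin.mk.injEq] at h
  have hi' : i + 1 ≤ t := hi
  have hj' : j + 1 ≤ t := hj
  have : i = j := by
    rcases eq_or_lt_of_le hi' with h1 | h1 <;> rcases eq_or_lt_of_le hj' with h2 | h2
    · omega
    · rw [h1, Nat.mod_self, Nat.mod_eq_of_lt h2] at h; omega
    · rw [h2, Nat.mod_self, Nat.mod_eq_of_lt h1] at h; omega
    · rw [Nat.mod_eq_of_lt h1, Nat.mod_eq_of_lt h2] at h; omega
  simp [this]

lemma better_some {P : Profile A I} {a : A} {x : Option I} {b : I}
    (h : P.better a x (some b)) :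
    (∃ b₀, x = some b₀ ∧ P.pref a b₀ b) ∨ (x = none ∧ P.acc a b) := by
  cases x with
  | none => exact Or.inr ⟨rfl, h⟩
  | some b₀ => exact Or.inl ⟨b₀, rfl, h⟩

lemma better_irrefl {P : Profile A I} {a : A} {x : Option I} : ¬ P.better a x x := by
  cases x with
  | none => exact id
  | some b => exact P.irrefl a b

/-- an assignment `p` is pareto optimal iff its trading graph contains
no directed cycle. -/
theorem statement1 [Fintype A] [DecidableEq A] (P : Profile A I)
    (p : A → Option I) (hp : IsAssignment p) (hleg : Legal P p) :
    ParetoOptimal P p ↔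
      ¬ ∃ (t : ℕ) (_ : 0 < t) (τ : Fin t → A ⊕ I),
        Function.Injective τ ∧ ∀ r : Fin t, TGraph P p (τ r) (τ (cycSucc r)) := by
  classical
  constructor
  · -- Pareto optimal → no cycle
    intro hpo
    rintro ⟨t, ht, τ, hinj, hedge⟩
    apply hpo
    -- the item after an agent position
    have hnext : ∀ r a, τ r = Sum.inl a →
        ∃ b, τ (cycSucc r) = Sum.inr b ∧ P.better a (p a) (some b) := by
      intro r a hra
      have he := hedge r
      rw [hra] at he
      cases hb : τ (cycSucc r) with
      | inl a' => rw [hb] at he; exact absurd he (by simp [TGraph])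
      | inr b =>
        rw [hb] at he
        refine ⟨b, rfl, ?_⟩
        rcases he with ⟨b₀, hpa, hpref⟩ | ⟨hpa, hacc⟩
        · rw [hpa]; exact hpref
        · rw [hpa]; exact hacc
    -- the agent after an item position
    have hprev : ∀ r b, τ r = Sum.inr b →
        ∃ a, τ (cycSucc r) = Sum.inl a ∧
          (p a = some b ∨ ((∀ a', p a' ≠ some b) ∧ P.acc a b)) := by
      intro r b hrb
      have he := hedge r
      rw [hrb] at he
      cases hb : τ (cycSucc r) with
      | inr b' => rw [hb] at he; exact absurd he (by simp [TGraph])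
      | inl a => rw [hb] at he; exact ⟨a, rfl, he⟩
    set Q : A → I → Prop := fun a b => ∃ r, τ r = Sum.inl a ∧ τ (cycSucc r) = Sum.inr b
      with hQdef
    have hQex : ∀ a, (∃ r, τ r = Sum.inl a) → ∃ b, Q a b := by
      rintro a ⟨r, hr⟩
      obtain ⟨b, hb, -⟩ := hnext r a hr
      exact ⟨b, r, hr, hb⟩
    have hQbetter : ∀ a b, Q a b → P.better a (p a) (some b) := by
      rintro a b ⟨r, hr, hb⟩
      obtain ⟨b', hb', hbet⟩ := hnext r a hr
      rw [hb] at hb'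
      obtain rfl : b = b' := by injection hb'
      exact hbet
    have hQuniq : ∀ a a' b, Q a b → Q a' b → a = a' := by
      rintro a a' b ⟨r, hr, hb⟩ ⟨r', hr', hb'⟩
      have : cycSucc r = cycSucc r' := hinj (hb.trans hb'.symm)
      have : r = r' := cycSucc_inj' this
      subst this
      rw [hr] at hr'
      injection hr'
    -- the p-owner of an item in the cycle is in the cycle
    have hown : ∀ a b, Q a b → ∀ a', p a' = some b → ∃ r', τ r' = Sum.inl a' := by
      rintro a b ⟨r, hr, hb⟩ a' hpa'
      obtain ⟨a'', ha'', hcase⟩ := hprev (cycSucc r) b hb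
      rcases hcase with hpa'' | ⟨hun, -⟩
      · obtain rfl : a'' = a' := hp _ _ _ hpa'' hpa'
        exact ⟨_, ha''⟩
      · exact absurd hpa' (hun a')
    set q : A → Option I := fun a => if h : ∃ b, Q a b then some (Classical.choose h)
      else p a with hqdef
    have hq_in : ∀ a (h : ∃ b, Q a b), q a = some (Classical.choose h) ∧
        Q a (Classical.choose h) := by
      intro a h
      constructor
      · simp only [hqdef, dif_pos h]
      · exact Classical.choose_spec h
    have hq_out : ∀ a, ¬ (∃ b, Q a b) → q a = p a := by
      intro a h; simp only [hqdef, dif_neg h]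
    have hincyc : ∀ a, (∃ b, Q a b) ↔ (∃ r, τ r = Sum.inl a) := by
      intro a
      constructor
      · rintro ⟨b, r, hr, -⟩; exact ⟨r, hr⟩
      · exact hQex a
    refine ⟨q, ?_, ?_, ?_, ?_⟩
    · -- assignment
      intro a a' b h1 h2
      by_cases ha : ∃ b, Q a b <;> by_cases ha' : ∃ b, Q a' b
      · obtain ⟨hqa, hQa⟩ := hq_in a ha
        obtain ⟨hqa', hQa'⟩ := hq_in a' ha'
        rw [hqa] at h1; rw [hqa'] at h2
        have hb1 : Classical.choose ha = b := by injection h1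
        have hb2 : Classical.choose ha' = b := by injection h2
        exact hQuniq a a' b (hb1 ▸ hQa) (hb2 ▸ hQa')
      · obtain ⟨hqa, hQa⟩ := hq_in a ha
        rw [hqa] at h1
        have hb1 : Classical.choose ha = b := by injection h1
        rw [hq_out a' ha'] at h2
        exact absurd ((hincyc a').mpr (hown a b (hb1 ▸ hQa) a' h2)) ha'
      · obtain ⟨hqa', hQa'⟩ := hq_in a' ha'
        rw [hqa'] at h2
        have hb2 : Classical.choose ha' = b := by injection h2
        rw [hq_out a ha] at h1
        exact absurd ((hincyc a).mpr (hown a' b (hb2 ▸ hQa') a h1)) ha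
      · rw [hq_out a ha] at h1; rw [hq_out a' ha'] at h2
        exact hp _ _ _ h1 h2
    · -- legal
      intro a b hab
      by_cases ha : ∃ b, Q a b
      · obtain ⟨hqa, hQa⟩ := hq_in a ha
        rw [hqa] at hab
        have hb1 : Classical.choose ha = b := by injection hab
        have := hQbetter a b (hb1 ▸ hQa)
        rcases better_some this with ⟨b₀, -, hpref⟩ | ⟨-, hacc⟩
        · exact (P.pref_acc a b₀ b hpref).2
        · exact hacc
      · rw [hq_out a ha] at hab
        exact hleg a b hab
    · -- betterEq for all
      intro a
      by_cases ha : ∃ b, Q a b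
      · obtain ⟨hqa, hQa⟩ := hq_in a ha
        rw [hqa]
        exact Or.inr (hQbetter a _ hQa)
      · rw [hq_out a ha]; exact Or.inl rfl
    · -- strictly better for some
      have hagent : ∃ a, ∃ r, τ r = Sum.inl a := by
        cases h0 : τ ⟨0, ht⟩ with
        | inl a => exact ⟨a, _, h0⟩
        | inr b =>
          obtain ⟨a, ha, -⟩ := hprev ⟨0, ht⟩ b h0
          exact ⟨a, _, ha⟩
      obtain ⟨a, ha⟩ := hagent
      have hQa : ∃ b, Q a b := (hincyc a).mpr ha
      obtain ⟨hqa, hQa'⟩ := hq_in a hQa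
      refine ⟨a, ?_⟩
      rw [hqa]
      exact hQbetter a _ hQa'
  · -- no cycle → Pareto optimal
    intro hnc
    rintro ⟨q, hq, hqleg, hdom⟩
    apply hnc
    set S : A → Prop := fun a => P.better a (p a) (q a) with hSdef
    obtain ⟨a₀, hS0⟩ := hdom.2
    have hqsome : ∀ a, S a → ∃ b, q a = some b := by
      intro a h
      have h' : P.better a (p a) (q a) := h
      cases hq' : q a with
      | none =>
        rw [hq'] at h'
        exact absurd h' (by cases p a <;> exact id)
      | some b => exact ⟨b, rfl⟩
    by_cases hfree : ∃ a b, S a ∧ q a = some b ∧ ∀ a', p a' ≠ some b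
    · -- a self-loop gives a 2-cycle
      obtain ⟨a, b, hSa, hqa, hun⟩ := hfree
      refine ⟨2, by norm_num, fun r => if r.1 = 0 then Sum.inl a else Sum.inr b, ?_, ?_⟩
      · rintro ⟨i, hi⟩ ⟨j, hj⟩ h
        interval_cases i <;> interval_cases j <;> simp_all
      · rintro ⟨i, hi⟩
        interval_cases i
        · have hc : cycSucc (⟨0, hi⟩ : Fin 2) = ⟨1, by norm_num⟩ := by
            apply Fin.ext; show (0 + 1) % 2 = 1; norm_num
          rw [hc]
          show TGraph P p (Sum.inl a) (Sum.inr b)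
          have hSa' : P.better a (p a) (q a) := hSa
          rw [hqa] at hSa'
          rcases better_some hSa' with ⟨b₀, hpa, hpref⟩ | ⟨hpa, hacc⟩
          · exact Or.inl ⟨b₀, hpa, hpref⟩
          · exact Or.inr ⟨hpa, hacc⟩
        · have hc : cycSucc (⟨1, hi⟩ : Fin 2) = ⟨0, by norm_num⟩ := by
            apply Fin.ext; show (1 + 1) % 2 = 0; norm_num
          rw [hc]
          show TGraph P p (Sum.inr b) (Sum.inl a)
          exact Or.inr ⟨hun, hqleg a b hqa⟩
    · -- every wanted item is owned: build a trading cycle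
      push_neg at hfree
      have hstep : ∀ a : {a // S a}, ∃ b, q a.1 = some b := fun a => hqsome a.1 a.2
      set F : {a // S a} → I := fun a => Classical.choose (hstep a) with hFdef
      have hF : ∀ a, q a.1 = some (F a) := fun a => Classical.choose_spec (hstep a)
      have hgex : ∀ a : {a // S a}, ∃ a' : {a // S a}, p a'.1 = some (F a) := by
        intro a
        obtain ⟨a', hpa'⟩ := hfree a.1 (F a) a.2 (hF a)
        have hne : a' ≠ a.1 := by
          intro he
          rw [he] at hpa'
          have hpq : p a.1 = q a.1 := by rw [hpa', hF]
          have ha2 : P.better a.1 (p a.1) (q a.1) := a.2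
          rw [hpq] at ha2
          exact better_irrefl ha2
        have hS' : S a' := by
          rcases hdom.1 a' with heq | hb
          · exact absurd (hq a' a.1 (F a) (heq ▸ hpa') (hF a)) hne
          · exact hb
        exact ⟨⟨a', hS'⟩, hpa'⟩
      set g : {a // S a} → {a // S a} := fun a => Classical.choose (hgex a) with hgdef
      have hgp : ∀ a, p (g a).1 = some (F a) := fun a => Classical.choose_spec (hgex a)
      -- find a periodic point
      obtain ⟨i, j, hij, hw⟩ :=
        Finite.exists_ne_map_eq_of_infinite (fun k : ℕ => g^[k] ⟨a₀, hS0⟩)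
      wlog hlt : i < j generalizing i j
      · exact this j i hij.symm hw.symm (by omega)
      set y : {a // S a} := g^[i] ⟨a₀, hS0⟩ with hydef
      have hper : ∃ m, 0 < m ∧ g^[m] y = y := by
        refine ⟨j - i, by omega, ?_⟩
        rw [hydef, ← Function.iterate_add_apply]
        have : j - i + i = j := by omega
        rw [this]
        exact hw.symm
      set m : ℕ := Nat.find hper with hmdef
      obtain ⟨hm0, hmy⟩ : 0 < m ∧ g^[m] y = y := Nat.find_spec hper
      have hmin : ∀ k, k < m → ¬ (0 < k ∧ g^[k] y = y) := fun k hk => Nat.find_min hper hk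
      have hdist : ∀ u v, u < v → v < m → g^[u] y ≠ g^[v] y := by
        intro u v huv hvm he
        have h1 : g^[m - v + u] y = y := by
          rw [Function.iterate_add_apply, he, ← Function.iterate_add_apply]
          have : m - v + v = m := by omega
          rw [this, hmy]
        exact hmin (m - v + u) (by omega) ⟨by omega, h1⟩
      have hiter : ∀ k, g^[k + 1] y = g (g^[k] y) := by
        intro k; rw [Function.iterate_succ_apply']
      -- the cycle of length 2m
      refine ⟨2 * m, by omega,
        fun r => if r.1 % 2 = 0 then Sum.inl (g^[r.1 / 2] y).1
          else Sum.inr (F (g^[r.1 / 2] y)), ?_, ?_⟩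
      · -- injective
        have hF_inj : ∀ a a' : {a // S a}, F a = F a' → a = a' := by
          intro a a' h
          have h1 : q a.1 = some (F a') := by rw [hF a, h]
          exact Subtype.ext (hq a.1 a'.1 (F a') h1 (hF a'))
        have horb : ∀ u v : ℕ, u < m → v < m → g^[u] y = g^[v] y → u = v := by
          intro u v hu hv h
          rcases lt_trichotomy u v with h' | h' | h'
          · exact absurd h (hdist u v h' hv)
          · exact h'
          · exact absurd h.symm (hdist v u h' hu)
        rintro ⟨r, hr⟩ ⟨r', hr'⟩ h
        have hrd : r / 2 < m := by omega
        have hrd' : r' / 2 < m := by omega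
        simp only at h
        rcases Nat.eq_zero_or_pos (r % 2) with h1 | h1 <;>
          rcases Nat.eq_zero_or_pos (r' % 2) with h2 | h2
        · rw [if_pos h1, if_pos h2] at h
          have := horb _ _ hrd hrd' (Subtype.ext (by injection h))
          have : r = r' := by omega
          simp [this]
        · rw [if_pos h1, if_neg (by omega : ¬ r' % 2 = 0)] at h
          exact absurd h (by simp)
        · rw [if_neg (by omega : ¬ r % 2 = 0), if_pos h2] at h
          exact absurd h (by simp)
        · rw [if_neg (by omega : ¬ r % 2 = 0), if_neg (by omega : ¬ r' % 2 = 0)] at h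
          have hFe : F (g^[r / 2] y) = F (g^[r' / 2] y) := by injection h
          have := horb _ _ hrd hrd' (hF_inj _ _ hFe)
          have : r = r' := by omega
          simp [this]
      · -- edges
        rintro ⟨r, hr⟩
        have hrd : r / 2 < m := by omega
        rcases Nat.eq_zero_or_pos (r % 2) with h1 | h1
        · -- agent → item
          have hnv : ((r + 1) % (2 * m)) = r + 1 := Nat.mod_eq_of_lt (by omega)
          have hodd : (r + 1) % 2 ≠ 0 := by omega
          have hdiv : (r + 1) / 2 = r / 2 := by omega
          show TGraph P p _ _
          simp only [cycSucc, hnv, if_pos h1, if_neg hodd, hdiv]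
          set a : {a // S a} := g^[r / 2] y
          have hb : P.better a.1 (p a.1) (q a.1) := a.2
          rw [hF a] at hb
          rcases better_some hb with ⟨b₀, hpa, hpref⟩ | ⟨hpa, hacc⟩
          · exact Or.inl ⟨b₀, hpa, hpref⟩
          · exact Or.inr ⟨hpa, hacc⟩
        · -- item → agent
          show TGraph P p _ _
          have hkey : (g^[((r + 1) % (2 * m)) / 2] y) = g (g^[r / 2] y) := by
            rcases Nat.lt_or_ge (r + 1) (2 * m) with hlt2 | hge2
            · rw [Nat.mod_eq_of_lt hlt2]
              have : (r + 1) / 2 = r / 2 + 1 := by omega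
              rw [this, hiter]
            · have hre : r = 2 * m - 1 := by omega
              have : (r + 1) % (2 * m) = 0 := by
                have : r + 1 = 2 * m := by omega
                simp [this]
              rw [this]
              have hr2 : r / 2 = m - 1 := by omega
              have : g^[m] y = g (g^[m - 1] y) := by
                have := hiter (m - 1)
                rwa [(by omega : m - 1 + 1 = m)] at this
              simp only [Nat.zero_div, Function.iterate_zero_apply, hr2]
              conv_lhs => rw [← hmy]
              exact this
          have hev : ((r + 1) % (2 * m)) % 2 = 0 := by
            rcases Nat.lt_or_ge (r + 1) (2 * m) with hlt2 | hge2
            · rw [Nat.mod_eq_of_lt hlt2]; omega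
            · have : r + 1 = 2 * m := by omega
              simp [this]
          simp only [cycSucc, if_neg (by omega : ¬ r % 2 = 0), if_pos hev, hkey]
          exact Or.inl (hgp _)
end

section
/- For each i ∈ [t], the only trading cycle in Q_{2i} with respect to p is (a_1,b_1,...,a_n,b_n, c^i_1,d^i_1,...,c^i_{⌊log t⌋+1}, d^i_{⌊log t⌋+1}) (up to cyclic shift). -/
variable {A : Type*} {I : Type*}

/-! Under `pQ` every agent owns its own item, and in `Q_{2i}` every agent prefers at most one
item over its own, so "prefers the next agent's item" is a functional relation. The listed cycle
passes through every agent that has a successor, so any trading cycle `σ` of length `m` factors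
through it by a map `f : Fin m → Fin k` with `f (r + 1) = f r + 1`. Such a map is `r ↦ f 0 + r`;
injectivity gives `m ≤ k`, periodicity gives `k ∣ m`, hence `m = k` and `σ` is a rotation. -/

open Function

lemma cycSucc_eq_add_one {k : ℕ} [NeZero k] (r : Fin k) : cycSucc r = r + 1 := by
  ext
  simp [cycSucc, Fin.val_add]

namespace Fin

open Fin.NatCast

variable {m k : ℕ} [NeZero m] [NeZero k] {f : Fin m → Fin k}

lemma map_natCast_of_map_add_one (hf : ∀ r, f (r + 1) = f r + 1) (j : ℕ) :
    f j = f 0 + j := by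
  induction j with
  | zero => simp
  | succ j ih => rw [Nat.cast_succ, hf, ih, Nat.cast_succ, add_assoc]

lemma eq_of_injective_of_map_add_one (hf : ∀ r, f (r + 1) = f r + 1) (hinj : Injective f) :
    m = k := by
  have hdvd : k ∣ m := by
    have h := map_natCast_of_map_add_one hf m
    rwa [Fin.natCast_self, left_eq_add, Fin.natCast_eq_zero] at h
  have hle : m ≤ k := by simpa using Fintype.card_le_of_injective f hinj
  exact le_antisymm hle (Nat.le_of_dvd (Nat.pos_of_neZero m) hdvd)

lemma map_eq_add_of_map_add_one (hf : ∀ r, f (r + 1) = f r + 1) (r : Fin m) :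
    f r = f 0 + (r : ℕ) := by
  simpa using map_natCast_of_map_add_one hf r

end Fin

section FunctionalCycle

variable {α : Type*} {R : α → α → Prop} {k m : ℕ} {τ : Fin k → α} {σ : Fin m → α}

lemma exists_rotation_eq_of_functional_cycle (hR : ∀ a b c, R a b → R a c → b = c)
    (hτ : Injective τ) (hτR : ∀ r, R (τ r) (τ (cycSucc r)))
    (hdom : ∀ a b, R a b → a ∈ Set.range τ)
    (hm : 0 < m) (hσ : Injective σ) (hσR : ∀ r, R (σ r) (σ (cycSucc r))) :
    ∃ (h : m = k) (sh : Fin k), ∀ r, σ (Fin.cast h.symm (r + sh)) = τ r := by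
  have : NeZero m := ⟨hm.ne'⟩
  choose f hf using fun r => hdom _ _ (hσR r)
  have : NeZero k := ⟨fun hk => (hk ▸ f 0).elim0⟩
  have hf1 : ∀ r, f (r + 1) = f r + 1 := by
    intro r
    apply hτ
    rw [← cycSucc_eq_add_one, ← cycSucc_eq_add_one, hf]
    exact hR _ _ _ (hσR r) (hf r ▸ hτR (f r))
  have hinj : Injective f := fun a b h => hσ (by rw [← hf, ← hf, h])
  obtain rfl := Fin.eq_of_injective_of_map_add_one hf1 hinj
  refine ⟨rfl, -f 0, fun r => ?_⟩
  rw [Fin.cast_eq_self, ← hf, Fin.map_eq_add_of_map_add_one hf1, Fin.cast_val_eq_self]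
  congr 1
  abel

end FunctionalCycle

lemma isTradingCycle_some_iff {A : Type*} {pref : A → A → A → Prop} {t : ℕ} {σ : Fin t → A} :
    IsTradingCycle pref some σ ↔ Injective σ ∧ ∀ r, pref (σ r) (σ r) (σ (cycSucc r)) := by
  simp [IsTradingCycle]

section Q2

variable {n s i : ℕ}

def q2Cycle (n s i : ℕ) (r : Fin (n + s)) : AgQ n s :=
  if h : (r : ℕ) < n then Sum.inl ⟨r, h⟩
  else Sum.inr (⟨r - n, by omega⟩, i.testBit (r - n))

lemma Q2pref_self_unique {a b c : AgQ n s} (hb : Q2pref n s i a a b) (hc : Q2pref n s i a a c) :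
    b = c := by
  rcases a with _ | ⟨_, _⟩ <;> rcases b with _ | ⟨_, _⟩ <;> rcases c with _ | ⟨_, _⟩ <;>
    simp only [Q2pref, true_and] at hb hc <;> grind

lemma q2Cycle_injective : Injective (q2Cycle n s i) := by
  intro x y h
  unfold q2Cycle at h
  split_ifs at h <;> simp at h <;> omega

lemma mem_range_q2Cycle {a b : AgQ n s} (h : Q2pref n s i a a b) :
    a ∈ Set.range (q2Cycle n s i) := by
  rcases a with r | ⟨j, bb⟩
  · exact ⟨⟨r, by omega⟩, by simp [q2Cycle]⟩
  · have hbb : bb = i.testBit j := by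
      rcases b with _ | ⟨_, _⟩ <;> exact h.2.1
    exact ⟨⟨n + j, by omega⟩, by simp [q2Cycle, hbb]⟩

lemma Q2pref_q2Cycle (hn : 0 < n) (hs : 0 < s) (r : Fin (n + s)) :
    Q2pref n s i (q2Cycle n s i r) (q2Cycle n s i r) (q2Cycle n s i (cycSucc r)) := by
  have hr := r.isLt
  have hc : (cycSucc r : ℕ) = if (r : ℕ) + 1 = n + s then (0 : ℕ) else (r : ℕ) + 1 := by
    simp only [cycSucc]
    split_ifs with h
    · simp [h]
    · exact Nat.mod_eq_of_lt (by omega)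
  unfold q2Cycle
  split_ifs at hc ⊢ <;> simp only [Q2pref, true_and] <;> grind

end Q2

/-- the only trading cycle in `Q_{2i}` with respect to `p` is
`(a_1,b_1,…,a_n,b_n,c^i_1,d^i_1,…,c^i_{⌊log t⌋+1},d^i_{⌊log t⌋+1})`, up to cyclic shift. -/
theorem statement18 (n t i : ℕ) (hn : 0 < n) :
    IsTradingCycle (Q2pref n (Nat.log 2 t + 1) i) (pQ n (Nat.log 2 t + 1))
      (fun r : Fin (n + (Nat.log 2 t + 1)) =>
        if h : (r : ℕ) < n then Sum.inl (⟨(r : ℕ), h⟩ : Fin n)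
        else Sum.inr (⟨(r : ℕ) - n, by omega⟩, i.testBit ((r : ℕ) - n))) ∧
    ∀ (m : ℕ), 0 < m → ∀ σ : Fin m → AgQ n (Nat.log 2 t + 1),
      IsTradingCycle (Q2pref n (Nat.log 2 t + 1) i) (pQ n (Nat.log 2 t + 1)) σ →
        ∃ (h : m = n + (Nat.log 2 t + 1)) (sh : Fin (n + (Nat.log 2 t + 1))),
          ∀ r : Fin (n + (Nat.log 2 t + 1)),
            σ (Fin.cast h.symm (r + sh)) =
              (if hr : (r : ℕ) < n then Sum.inl (⟨(r : ℕ), hr⟩ : Fin n)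
               else Sum.inr (⟨(r : ℕ) - n, by omega⟩, i.testBit ((r : ℕ) - n))) := by
  have hstep := Q2pref_q2Cycle (i := i) hn (Nat.succ_pos (Nat.log 2 t))
  refine ⟨isTradingCycle_some_iff.2 ⟨q2Cycle_injective, hstep⟩, fun m hm σ hσ => ?_⟩
  obtain ⟨hσinj, hσstep⟩ := isTradingCycle_some_iff.1 hσ
  exact exists_rotation_eq_of_functional_cycle (R := fun a b => Q2pref _ _ i a a b)
    (fun _ _ _ => Q2pref_self_unique) q2Cycle_injective hstep
    (fun _ _ => mem_range_q2Cycle) hm hσinj hσstep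
end
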